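/- For every nonnegative integer n, sum_{j=0}^{2n+1} (-s)^j (2n+1 choose j)_q = sum_{k=0}^n (n choose k)_{q^2} prod_{j=0}^{2k}(q^j - s) * ((q;q^2)_{n+1} / (q;q^2)_{k+1}). -/

import Mathlib

open Finset

/-- Gaussian (q-)binomial coefficient, defined over any commutative ring by the
Pascal-type recurrence `[n+1, k+1] = [n, k] + q^(k+1) * [n, k+1]`. -/
def qbinom {R : Type*} [CommRing R] (q : R) : ℕ → ℕ → R
  | _, 0 => 1
  | 0, _ + 1 => 0
  | n + 1, k + 1 => qbinom q n k + q ^ (k + 1) * qbinom q n (k + 1)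

/-!
Write `L_N(s) = ∑_j (-s)^j [N, j]_q`. Pascal's rule gives `L_{N+1}(s) = L_N(q s) - s L_N(s)`,
so it suffices to check that the right-hand side `G_n(s)` of the theorem and its even-index
companion `M_n(s) = ∑_k [n, k]_{q²} ∏_{j<2k} (q^j - s) ∏_{k ≤ i < n} (1 - q^(2i+1))`
satisfy `G_n(s) = M_n(q s) - s M_n(s)` and `M_{n+1}(s) = G_n(q s) - s G_n(s)`; then
`L_{2n} = M_n` and `L_{2n+1} = G_n` by induction. Both relations are telescoping sums, driven
by the two Pascal rules for `[n, k]_{q²}` and by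
`∏_{j ≤ m} (q^j - q s) = (1 - q s) q^m ∏_{j < m} (q^j - s)`.
-/

section

variable {R : Type*} [CommRing R] (q : R)

@[simp] lemma qbinom_zero_right (n : ℕ) : qbinom q n 0 = 1 := by
  cases n <;> rfl

lemma qbinom_succ_succ (n k : ℕ) :
    qbinom q (n + 1) (k + 1) = qbinom q n k + q ^ (k + 1) * qbinom q n (k + 1) := rfl

lemma qbinom_eq_zero_of_lt : ∀ {n k : ℕ}, n < k → qbinom q n k = 0
  | 0, _ + 1, _ => rfl
  | n + 1, k + 1, h => by
    rw [qbinom_succ_succ, qbinom_eq_zero_of_lt (by omega), qbinom_eq_zero_of_lt (by omega)]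
    ring

lemma qbinom_self_succ (n : ℕ) : qbinom q n (n + 1) = 0 :=
  qbinom_eq_zero_of_lt q n.lt_succ_self

lemma qbinom_succ_succ' : ∀ {n k : ℕ}, k ≤ n →
    qbinom q (n + 1) (k + 1) = q ^ (n - k) * qbinom q n k + qbinom q n (k + 1)
  | 0, 0, _ => by simp [qbinom_succ_succ, qbinom_self_succ]
  | n + 1, 0, _ => by
    have ih := qbinom_succ_succ' (n := n) (k := 0) n.zero_le
    have h₁ := qbinom_succ_succ q (n + 1) 0
    have h₂ := qbinom_succ_succ q n 0
    simp only [qbinom_zero_right, Nat.sub_zero] at ih h₁ h₂ ⊢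
    linear_combination h₁ + q * ih - h₂
  | n + 1, k + 1, hk => by
    obtain rfl | hk := (Nat.le_of_succ_le_succ hk).eq_or_lt
    · simp [qbinom_succ_succ q (k + 1), qbinom_self_succ]
    have ih₀ := qbinom_succ_succ' (n := n) (k := k) hk.le
    have ih₁ := qbinom_succ_succ' (n := n) (k := k + 1) hk
    have hpow : q ^ (k + 2) * q ^ (n - (k + 1)) = q ^ (k + 1) * q ^ (n - k) := by
      rw [← pow_add, ← pow_add]
      congr 1
      omega
    rw [Nat.add_sub_add_right]
    linear_combination qbinom_succ_succ q (n + 1) (k + 1) + ih₀ + q ^ (k + 2) * ih₁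
      - q ^ (n - k) * qbinom_succ_succ q n k - qbinom_succ_succ q n (k + 1)
      + qbinom q n (k + 1) * hpow

lemma one_sub_pow_mul_qbinom_succ {n k : ℕ} (h : k ≤ n) :
    (1 - q ^ (k + 1)) * qbinom q n (k + 1) = (1 - q ^ (n - k)) * qbinom q n k := by
  linear_combination qbinom_succ_succ q n k - qbinom_succ_succ' q h

def qbinomAltSum (N : ℕ) (s : R) : R :=
  ∑ j ∈ range (N + 1), (-s) ^ j * qbinom q N j

lemma qbinomAltSum_succ (N : ℕ) (s : R) :
    qbinomAltSum q (N + 1) s = qbinomAltSum q N (q * s) - s * qbinomAltSum q N s := by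
  have shifted : ∑ j ∈ range (N + 1), (-(q * s)) ^ (j + 1) * qbinom q N (j + 1)
      = qbinomAltSum q N (q * s) - 1 := by
    rw [qbinomAltSum, sum_range_succ, sum_range_succ' _ N, qbinom_self_succ]
    simp
  calc qbinomAltSum q (N + 1) s
      = ∑ j ∈ range (N + 1), (-s) ^ (j + 1) * qbinom q (N + 1) (j + 1) + 1 := by
        rw [qbinomAltSum, sum_range_succ']
        simp
    _ = ∑ j ∈ range (N + 1),
          ((-(q * s)) ^ (j + 1) * qbinom q N (j + 1) + (-s) * ((-s) ^ j * qbinom q N j)) + 1 := by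
        congr 1
        refine sum_congr rfl fun j _ => ?_
        rw [qbinom_succ_succ]
        ring
    _ = qbinomAltSum q N (q * s) - s * qbinomAltSum q N s := by
        rw [sum_add_distrib, shifted, ← mul_sum]
        unfold qbinomAltSum
        ring

def powSubProd (s : R) (m : ℕ) : R := ∏ j ∈ range m, (q ^ j - s)

lemma powSubProd_succ (s : R) (m : ℕ) :
    powSubProd q s (m + 1) = powSubProd q s m * (q ^ m - s) :=
  prod_range_succ _ _

lemma powSubProd_mul_succ (s : R) (m : ℕ) :
    powSubProd q (q * s) (m + 1) = (1 - q * s) * q ^ m * powSubProd q s m := by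
  induction m with
  | zero => simp [powSubProd]
  | succ m ih =>
    rw [powSubProd_succ, ih, powSubProd_succ]
    ring

lemma powSubProd_mul_succ_sub (s : R) (m : ℕ) :
    powSubProd q (q * s) (m + 1) - s * powSubProd q s (m + 1)
      = powSubProd q s (m + 2) + q ^ m * (1 - q ^ (m + 1)) * powSubProd q s m := by
  rw [powSubProd_mul_succ, powSubProd_succ, powSubProd_succ, powSubProd_succ]
  ring

-- `(q; q²)_b / (q; q²)_a`
def oddPochRatio (a b : ℕ) : R := ∏ i ∈ Ico a b, (1 - q ^ (2 * i + 1))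

@[simp] lemma oddPochRatio_self (a : ℕ) : oddPochRatio q a a = 1 := by
  simp [oddPochRatio]

lemma oddPochRatio_eq_mul_succ {a b : ℕ} (h : a < b) :
    oddPochRatio q a b = (1 - q ^ (2 * a + 1)) * oddPochRatio q (a + 1) b :=
  prod_eq_prod_Ico_succ_bot h _

lemma oddPochRatio_succ_right {a b : ℕ} (h : a ≤ b) :
    oddPochRatio q a (b + 1) = oddPochRatio q a b * (1 - q ^ (2 * b + 1)) :=
  prod_Ico_succ_top h _

lemma qbinom_sq_mul_oddPochRatio_succ {n k : ℕ} (h : k ≤ n) :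
    qbinom (q ^ 2) n k * oddPochRatio q (k + 1) (n + 1)
      = qbinom (q ^ 2) n k * oddPochRatio q k n
        + q ^ (2 * k + 1) * (1 - q ^ (2 * k + 2)) * qbinom (q ^ 2) n (k + 1)
          * oddPochRatio q (k + 1) n := by
  obtain rfl | h := h.eq_or_lt
  · simp [qbinom_self_succ]
  have habs := one_sub_pow_mul_qbinom_succ (q ^ 2) h.le
  have hpow : q ^ (2 * k + 1) * (q ^ 2) ^ (n - k) = q ^ (2 * n + 1) := by
    rw [← pow_mul, ← pow_add]
    congr 1
    omega
  rw [oddPochRatio_eq_mul_succ q h, oddPochRatio_succ_right q h]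
  linear_combination oddPochRatio q (k + 1) n * (qbinom (q ^ 2) n k * hpow - q ^ (2 * k + 1) * habs)

def evenExpansion (s : R) (n : ℕ) : R :=
  ∑ k ∈ range (n + 1), qbinom (q ^ 2) n k * powSubProd q s (2 * k) * oddPochRatio q k n

def oddExpansion (s : R) (n : ℕ) : R :=
  ∑ k ∈ range (n + 1),
    qbinom (q ^ 2) n k * powSubProd q s (2 * k + 1) * oddPochRatio q (k + 1) (n + 1)

lemma evenExpansion_shift_sub (s : R) (n : ℕ) :
    evenExpansion q (q * s) n - s * evenExpansion q s n = oddExpansion q s n := by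
  -- the defect of term `k + 1` cancels the change of the `oddPochRatio` factor of term `k`
  set defect : ℕ → R := fun k => qbinom (q ^ 2) n k * oddPochRatio q k n *
    (powSubProd q (q * s) (2 * k) - s * powSubProd q s (2 * k) - powSubProd q s (2 * k + 1))
  have step : ∀ k ∈ range (n + 1),
      qbinom (q ^ 2) n k * powSubProd q (q * s) (2 * k) * oddPochRatio q k n
        - s * (qbinom (q ^ 2) n k * powSubProd q s (2 * k) * oddPochRatio q k n)
        - qbinom (q ^ 2) n k * powSubProd q s (2 * k + 1) * oddPochRatio q (k + 1) (n + 1)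
      = defect k - defect (k + 1) := fun k hk => by
    have hP := powSubProd_mul_succ_sub q s (2 * k + 1)
    rw [show 2 * k + 1 + 1 = 2 * (k + 1) by ring, show 2 * k + 1 + 2 = 2 * (k + 1) + 1 by ring]
      at hP
    linear_combination qbinom (q ^ 2) n (k + 1) * oddPochRatio q (k + 1) n * hP
      - powSubProd q s (2 * k + 1)
        * qbinom_sq_mul_oddPochRatio_succ q (Nat.lt_succ_iff.mp (mem_range.mp hk))
  have h₀ : defect 0 = 0 := by simp [defect, powSubProd]
  have hlast : defect (n + 1) = 0 := by simp [defect, qbinom_self_succ]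
  rw [← sub_eq_zero, evenExpansion, evenExpansion, oddExpansion, mul_sum, ← sum_sub_distrib,
    ← sum_sub_distrib, sum_congr rfl step, sum_range_sub', h₀, hlast, sub_zero]

lemma oddExpansion_shift_sub (s : R) (n : ℕ) :
    oddExpansion q (q * s) n - s * oddExpansion q s n = evenExpansion q s (n + 1) := by
  set g : ℕ → R := fun k =>
    (q ^ 2) ^ k * qbinom (q ^ 2) n k * powSubProd q s (2 * k) * oddPochRatio q k (n + 1)
  have step : ∀ k ∈ range (n + 1),
      qbinom (q ^ 2) n k * powSubProd q (q * s) (2 * k + 1) * oddPochRatio q (k + 1) (n + 1)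
        - s * (qbinom (q ^ 2) n k * powSubProd q s (2 * k + 1) * oddPochRatio q (k + 1) (n + 1))
        - qbinom (q ^ 2) (n + 1) (k + 1) * powSubProd q s (2 * (k + 1))
          * oddPochRatio q (k + 1) (n + 1)
      = g k - g (k + 1) := fun k hk => by
    simp only [g]
    rw [show 2 * (k + 1) = 2 * k + 2 by ring, qbinom_succ_succ,
      oddPochRatio_eq_mul_succ q (mem_range.mp hk : k < n + 1)]
    linear_combination qbinom (q ^ 2) n k * oddPochRatio q (k + 1) (n + 1)
      * powSubProd_mul_succ_sub q s (2 * k)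
  have hlast : g (n + 1) = 0 := by simp [g, qbinom_self_succ]
  have hsplit : evenExpansion q s (n + 1) = ∑ k ∈ range (n + 1),
      qbinom (q ^ 2) (n + 1) (k + 1) * powSubProd q s (2 * (k + 1)) * oddPochRatio q (k + 1) (n + 1)
        + g 0 := by
    rw [evenExpansion, sum_range_succ']
    simp [g, powSubProd]
  rw [hsplit, ← sub_eq_iff_eq_add', oddExpansion, oddExpansion, mul_sum, ← sum_sub_distrib,
    ← sum_sub_distrib, sum_congr rfl step, sum_range_sub', hlast, sub_zero]

lemma qbinomAltSum_two_mul (n : ℕ) (s : R) :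
    qbinomAltSum q (2 * n) s = evenExpansion q s n := by
  induction n generalizing s with
  | zero => simp [qbinomAltSum, evenExpansion, powSubProd]
  | succ n ih =>
    have odd (t : R) : qbinomAltSum q (2 * n + 1) t = oddExpansion q t n := by
      rw [qbinomAltSum_succ, ih, ih, evenExpansion_shift_sub]
    rw [show 2 * (n + 1) = 2 * n + 1 + 1 by ring, qbinomAltSum_succ, odd, odd,
      oddExpansion_shift_sub]

end

theorem stmt15 {R : Type*} [CommRing R] (s q : R) (n : ℕ) :
    ∑ j ∈ Finset.range (2 * n + 2), (-s) ^ j * qbinom q (2 * n + 1) j =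
      ∑ k ∈ Finset.range (n + 1),
        qbinom (q ^ 2) n k * (∏ j ∈ Finset.range (2 * k + 1), (q ^ j - s)) *
          ∏ i ∈ Finset.Ico (k + 1) (n + 1), (1 - q ^ (2 * i + 1)) := by
  change qbinomAltSum q (2 * n + 1) s = oddExpansion q s n
  rw [qbinomAltSum_succ, qbinomAltSum_two_mul, qbinomAltSum_two_mul, evenExpansion_shift_sub]
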